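/- Let $f(x) = a\sin(x/b)\sin(cx)$ with $a, b, c > 0$. For any fixed $x_0$ with $\sin(x_0/b) \neq 0$ and any interval $I$ centered at $x_0$ of length at least $2\pi/c$, the image $f(I)$ contains the interval $[-a|\sin(x_0/b)| + \frac{a}{b}\cdot\frac{\pi}{c},\; a|\sin(x_0/b)| - \frac{a}{b}\cdot\frac{\pi}{c}]$ whenever this interval is nonempty. -/

import Mathlib

/-!
Near `x₀` the envelope `a sin(x/b)` moves by at most `(a/b)(π/c)` over the window `|x - x₀| ≤ π/c`,
while `sin(cx)` attains both `1` and `-1` in that window. So `f` takes a value within `(a/b)(π/c)`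
of `a sin(x₀/b)` and another within `(a/b)(π/c)` of `-a sin(x₀/b)`; the intermediate value
theorem fills in everything between them.
-/

open Real Set

lemma Icc_neg_abs_add_subset_uIcc {u v m δ : ℝ} (hu : |u - m| ≤ δ) (hv : |v + m| ≤ δ) :
    Icc (-|m| + δ) (|m| - δ) ⊆ uIcc v u := by
  rw [abs_le] at hu hv
  rcases le_total 0 m with hm | hm
  · rw [abs_of_nonneg hm]
    exact (Icc_subset_Icc (by linarith) (by linarith)).trans Icc_subset_uIcc
  · rw [abs_of_nonpos hm]
    exact (Icc_subset_Icc (by linarith) (by linarith)).trans Icc_subset_uIcc'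

lemma exists_mem_Icc_sin_mul_eq {c : ℝ} (hc : 0 < c) (x₀ t : ℝ) :
    ∃ x ∈ Icc (x₀ - π / c) (x₀ + π / c), sin (c * x) = sin t := by
  obtain ⟨x, hx, hsin⟩ := (sin_periodic.const_mul c).exists_mem_Ico
    (by positivity : 0 < c⁻¹ * (2 * π)) (t / c) (x₀ - π / c)
  have hend : x₀ - π / c + c⁻¹ * (2 * π) = x₀ + π / c := by ring
  refine ⟨x, Ico_subset_Icc_self (hend ▸ hx), ?_⟩
  rw [← hsin, mul_div_cancel₀ t hc.ne']

lemma abs_mul_sin_div_sub_le {a b : ℝ} (ha : 0 ≤ a) (hb : 0 < b) (x y : ℝ) :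
    |a * sin (x / b) - a * sin (y / b)| ≤ a / b * |x - y| := by
  calc |a * sin (x / b) - a * sin (y / b)| = a * |sin (x / b) - sin (y / b)| := by
        rw [← mul_sub, abs_mul, abs_of_nonneg ha]
    _ ≤ a * |x / b - y / b| := mul_le_mul_of_nonneg_left (abs_sin_sub_sin_le _ _) ha
    _ = a / b * |x - y| := by rw [← sub_div, abs_div, abs_of_pos hb]; ring

theorem interference_image_contains_interval_general
    (a b c : ℝ) (ha : 0 < a) (hb : 0 < b) (hc : 0 < c)
    (f : ℝ → ℝ) (hf : ∀ x, f x = a * Real.sin (x / b) * Real.sin (c * x))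
    (x₀ : ℝ)
    (r : ℝ) (hr : π / c ≤ r) :
    Set.Icc (-(a * |Real.sin (x₀ / b)|) + (a / b) * (π / c))
        (a * |Real.sin (x₀ / b)| - (a / b) * (π / c))
      ⊆ f '' Set.Icc (x₀ - r) (x₀ + r) := by
  have hfc : Continuous f := funext hf ▸ by fun_prop
  have henv : ∀ x ∈ Icc (x₀ - π / c) (x₀ + π / c),
      |a * sin (x / b) - a * sin (x₀ / b)| ≤ a / b * (π / c) := fun x hx =>
    (abs_mul_sin_div_sub_le ha.le hb x x₀).trans <|
      mul_le_mul_of_nonneg_left (abs_sub_le_iff.2 ⟨by linarith [hx.2], by linarith [hx.1]⟩)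
        (by positivity)
  obtain ⟨xpos, hxpos, hsinpos⟩ := exists_mem_Icc_sin_mul_eq hc x₀ (π / 2)
  obtain ⟨xneg, hxneg, hsinneg⟩ := exists_mem_Icc_sin_mul_eq hc x₀ (-(π / 2))
  rw [sin_pi_div_two] at hsinpos
  rw [sin_neg, sin_pi_div_two] at hsinneg
  have hwindow : Icc (x₀ - π / c) (x₀ + π / c) ⊆ Icc (x₀ - r) (x₀ + r) :=
    Icc_subset_Icc (by linarith) (by linarith)
  have habs : a * |sin (x₀ / b)| = |a * sin (x₀ / b)| := by rw [abs_mul, abs_of_pos ha]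
  rw [habs]
  calc _ ⊆ uIcc (f xneg) (f xpos) := Icc_neg_abs_add_subset_uIcc
        (by rw [hf, hsinpos, mul_one]; exact henv xpos hxpos)
        (by rw [hf, hsinneg, mul_neg_one, neg_add_eq_sub, abs_sub_comm]; exact henv xneg hxneg)
    _ ⊆ f '' uIcc xneg xpos := intermediate_value_uIcc hfc.continuousOn
    _ ⊆ f '' Icc (x₀ - r) (x₀ + r) := image_mono ((uIcc_subset_Icc hxneg hxpos).trans hwindow)

/-- For `f(x) = a sin(x/b) sin(cx)` with `a,b,c > 0`, any interval centered at `x₀`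
(with `sin(x₀/b) ≠ 0`) of length at least `2π/c` has image under `f` containing the interval
`[-a|sin(x₀/b)| + (a/b)(π/c), a|sin(x₀/b)| - (a/b)(π/c)]` whenever it is nonempty. -/
theorem interference_image_contains_interval
    (a b c : ℝ) (ha : 0 < a) (hb : 0 < b) (hc : 0 < c)
    (f : ℝ → ℝ) (hf : ∀ x, f x = a * Real.sin (x / b) * Real.sin (c * x))
    (x₀ : ℝ) (hx₀ : Real.sin (x₀ / b) ≠ 0)
    (r : ℝ) (hr : π / c ≤ r)
    (hne : -(a * |Real.sin (x₀ / b)|) + (a / b) * (π / c)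
            ≤ a * |Real.sin (x₀ / b)| - (a / b) * (π / c)) :
    Set.Icc (-(a * |Real.sin (x₀ / b)|) + (a / b) * (π / c))
        (a * |Real.sin (x₀ / b)| - (a / b) * (π / c))
      ⊆ f '' Set.Icc (x₀ - r) (x₀ + r) :=
  interference_image_contains_interval_general a b c ha hb hc f hf x₀ r hr
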